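/- Let M be a loopless connected matroid on [q], let w be a point of the Bergman fan lying in the relative interior of a maximal cone K, and let w_min = min over circuits C with non-constant w|_C of (max^1_{e∈C} w_e − max^2_{e∈C} w_e). Let C' be a circuit achieving this minimum, let B = {b ∈ [q] : w_b = max^2_{e∈C'} w_e}, and set u = w + w_min·1_B. Then u lies in the Bergman fan, d_tr(w, u) = w_min, and for the circuit C', argmax_{e∈C'} u_e strictly contains argmax_{e∈C'} w_e (so u lies on the boundary of K). -/
import Mathlib


/-- The tropical symmetric distance on `ℝ^q`. -/
noncomputable def dtr (q : ℕ) [NeZero q] (x y : Fin q → ℝ) : ℝ :=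
  (Finset.univ.sup' Finset.univ_nonempty fun i => y i - x i) -
  (Finset.univ.inf' Finset.univ_nonempty fun i => y i - x i)

/-- A circuit of a matroid: a minimal dependent set. -/
def IsCircuit {α : Type*} (M : Matroid α) (C : Set α) : Prop :=
  M.Dep C ∧ ∀ D ⊂ C, ¬ M.Dep D

/-- A loopless matroid: every singleton of the ground set is independent. -/
def Loopless {α : Type*} (M : Matroid α) : Prop :=
  ∀ a ∈ M.E, M.Indep {a}

/-- A connected matroid: any two distinct ground-set elements lie in a common circuit. -/
def Connected {α : Type*} (M : Matroid α) : Prop :=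
  ∀ a ∈ M.E, ∀ b ∈ M.E, a ≠ b → ∃ C, IsCircuit M C ∧ a ∈ C ∧ b ∈ C

/-- The set of elements of `C` at which `w` attains its maximum over `C`. -/
def argmaxOn {α : Type*} (C : Set α) (w : α → ℝ) : Set α :=
  {e ∈ C | ∀ f ∈ C, w f ≤ w e}

/-- Membership in the Bergman fan of a matroid `M`. -/
def InBergmanFan {α : Type*} (M : Matroid α) (w : α → ℝ) : Prop :=
  ∀ C, IsCircuit M C → (argmaxOn C w).Nontrivial

/-- The largest value of `w` on `C`. -/
noncomputable def max1 {α : Type*} (C : Set α) (w : α → ℝ) : ℝ := sSup (w '' C)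

/-- The second-largest distinct value of `w` on `C`. -/
noncomputable def max2 {α : Type*} (C : Set α) (w : α → ℝ) : ℝ :=
  sSup ((w '' C) \ {max1 C w})

/-- `w` is non-constant on `C`. -/
def NonconstOn {α : Type*} (C : Set α) (w : α → ℝ) : Prop :=
  ∃ a ∈ C, ∃ b ∈ C, w a ≠ w b

/-- `w_min`: the minimum, over circuits on which `w` is non-constant,
of the gap between the largest and second-largest values of `w` on the circuit. -/
noncomputable def wMin {α : Type*} (M : Matroid α) (w : α → ℝ) : ℝ :=
  sInf {d : ℝ | ∃ C, IsCircuit M C ∧ NonconstOn C w ∧ d = max1 C w - max2 C w}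


lemma max1_mem {q : ℕ} {C : Set (Fin q)} (w : Fin q → ℝ) (hC : C.Nonempty) :
    ∃ a ∈ C, w a = max1 C w := by
  have h := (hC.image w).csSup_mem (Set.toFinite _)
  obtain ⟨a, ha, hwa⟩ := h
  exact ⟨a, ha, hwa⟩

lemma le_max1 {q : ℕ} {C : Set (Fin q)} (w : Fin q → ℝ) {e : Fin q} (he : e ∈ C) :
    w e ≤ max1 C w :=
  le_csSup (Set.toFinite _).bddAbove ⟨e, he, rfl⟩

lemma max2_spec {q : ℕ} {C : Set (Fin q)} {w : Fin q → ℝ} (h : NonconstOn C w) :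
    (∃ b ∈ C, w b = max2 C w) ∧ max2 C w < max1 C w ∧
      ∀ e ∈ C, w e ≠ max1 C w → w e ≤ max2 C w := by
  obtain ⟨a, ha, b, hb, hab⟩ := h
  have hne : ((w '' C) \ {max1 C w}).Nonempty := by
    rcases eq_or_ne (w a) (max1 C w) with h1 | h1
    · exact ⟨w b, ⟨b, hb, rfl⟩, fun hh => hab (h1.trans (Set.mem_singleton_iff.1 hh).symm)⟩
    · exact ⟨w a, ⟨a, ha, rfl⟩, h1⟩
  have hmem := hne.csSup_mem (Set.toFinite _)
  obtain ⟨⟨c, hc, hwc⟩, hne1⟩ := hmem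
  have hle1 : max2 C w ≤ max1 C w := by rw [max2, ← hwc]; exact le_max1 w hc
  refine ⟨⟨c, hc, hwc⟩, lt_of_le_of_ne hle1 hne1, fun e he hene => ?_⟩
  exact le_csSup (Set.toFinite _).bddAbove ⟨⟨e, he, rfl⟩, hene⟩

lemma wMin_le {q : ℕ} (M : Matroid (Fin q)) (w : Fin q → ℝ) {C : Set (Fin q)}
    (hC : IsCircuit M C) (hnc : NonconstOn C w) :
    wMin M w ≤ max1 C w - max2 C w := by
  apply csInf_le
  · refine ⟨0, ?_⟩
    rintro d ⟨D, hD, hncD, rfl⟩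
    have := (max2_spec hncD).2.1
    linarith
  · exact ⟨C, hC, hnc, rfl⟩

theorem stmt10 (q : ℕ) [NeZero q] (M : Matroid (Fin q)) (hE : M.E = Set.univ)
    (hloopless : Loopless M) (hconn : Connected M)
    (w : Fin q → ℝ) (hw : InBergmanFan M w)
    -- `w` lies in the relative interior of a maximal cone of the nested set fan
    (hmaxcone : ∀ u, InBergmanFan M u →
      (∀ C, IsCircuit M C → argmaxOn C u ⊆ argmaxOn C w) →
      ∀ C, IsCircuit M C → argmaxOn C u = argmaxOn C w)
    -- `C'` is a circuit achieving the minimum gap `w_min`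
    (C' : Set (Fin q)) (hC' : IsCircuit M C') (hnc : NonconstOn C' w)
    (hach : max1 C' w - max2 C' w = wMin M w)
    -- `B` is the set of coordinates where `w` equals the second maximum on `C'`,
    -- and `u = w + w_min · 1_B`
    (B : Set (Fin q)) (hB : B = {b : Fin q | w b = max2 C' w})
    (u : Fin q → ℝ) (hu : u = w + B.indicator (fun _ => wMin M w)) :
    InBergmanFan M u ∧ dtr q w u = wMin M w ∧
      (∀ C, IsCircuit M C → argmaxOn C w ⊆ argmaxOn C u) ∧
      argmaxOn C' w ⊂ argmaxOn C' u := by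
  obtain ⟨hm2mem, hm2lt, hm2le⟩ := max2_spec hnc
  obtain ⟨b0, hb0, hwb0⟩ := hm2mem
  obtain ⟨a0, ha0, hwa0⟩ := max1_mem w ⟨b0, hb0⟩
  set m1 := max1 C' w with hm1def
  set m2 := max2 C' w with hm2def
  have hδ : wMin M w = m1 - m2 := hach.symm
  have hδpos : 0 < wMin M w := by rw [hδ]; linarith
  have hux : ∀ x, u x = if w x = m2 then w x + wMin M w else w x := by
    intro x
    rw [hu, hB]
    by_cases h : w x = m2 <;> simp [Set.indicator, h]
  -- the key subset property
  have key : ∀ C, IsCircuit M C → argmaxOn C w ⊆ argmaxOn C u := by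
    intro C hC e he
    obtain ⟨heC, hemax⟩ := he
    refine ⟨heC, fun f hf => ?_⟩
    by_cases hfm : w f = m2
    · by_cases hem : w e = m2
      · rw [hux f, hux e, if_pos hfm, if_pos hem, hfm, hem]
      · have hflt : w f < w e :=
          lt_of_le_of_ne (hemax f hf) (by rw [hfm]; exact fun h => hem h.symm)
        have hncC : NonconstOn C w := ⟨e, heC, f, hf, hflt.ne'⟩
        have hwe1 : w e = max1 C w := by
          refine le_antisymm (le_max1 w heC) ?_
          obtain ⟨g, hg, hwg⟩ := max1_mem w ⟨e, heC⟩
          rw [← hwg]; exact hemax g hg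
        have hfle : w f ≤ max2 C w :=
          (max2_spec hncC).2.2 f hf (by rw [← hwe1]; exact hflt.ne)
        have hle := wMin_le M w hC hncC
        rw [hux f, hux e, if_pos hfm, if_neg hem]
        rw [hwe1] at *
        linarith
    · rw [hux f, if_neg hfm]
      have h1 : w f ≤ w e := hemax f hf
      rw [hux e]
      split <;> linarith
  -- b0 is a new argmax element for u on C'
  have hub0 : u b0 = m1 := by rw [hux b0, if_pos hwb0, hwb0, hδ]; ring
  have hb0max : b0 ∈ argmaxOn C' u := by
    refine ⟨hb0, fun f hf => ?_⟩
    rw [hub0, hux f]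
    by_cases h : w f = m2
    · rw [if_pos h, h, hδ]; linarith
    · rw [if_neg h]; exact le_max1 w hf
  have hb0not : b0 ∉ argmaxOn C' w := by
    rintro ⟨-, hmax⟩
    have := hmax a0 ha0
    rw [hwa0, hwb0] at this
    linarith
  refine ⟨fun C hC => (hw C hC).mono (key C hC), ?_, key, ?_⟩
  · -- distance
    have hval : ∀ i, u i - w i = if w i = m2 then wMin M w else 0 := by
      intro i; rw [hux i]; split <;> ring
    have hsup : (Finset.univ.sup' Finset.univ_nonempty fun i => u i - w i) = wMin M w := by
      apply le_antisymm
      · apply Finset.sup'_le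
        intro i _
        rw [hval i]; split <;> linarith
      · have h := Finset.le_sup' (f := fun i => u i - w i) (Finset.mem_univ b0)
        rw [hval b0, if_pos hwb0] at h
        exact h
    have hinf : (Finset.univ.inf' Finset.univ_nonempty fun i => u i - w i) = 0 := by
      apply le_antisymm
      · have h := Finset.inf'_le (f := fun i => u i - w i) (Finset.mem_univ a0)
        have ha0ne : w a0 ≠ m2 := by rw [hwa0]; exact hm2lt.ne'
        rw [hval a0, if_neg ha0ne] at h
        exact h
      · apply Finset.le_inf'
        intro i _
        rw [hval i]; split <;> linarith
    rw [dtr, hsup, hinf]; ring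
  · exact ⟨key C' hC', fun hcon => hb0not (hcon hb0max)⟩
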